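/- arXiv:2403.10656 — 2 statements merged into one kernel-verified Lean document; each statement's English description precedes it below -/
import Mathlib

section
/- Let K be an n × m row-stochastic matrix (n ≥ 2) and suppose there exist indices i ≠ ℓ in {1,…,n} and a ≠ b in {1,…,m} such that K_{ia} = 1, K_{ℓb} = 1, and K_{ja} = K_{jb} = 0 for all j ∉ {i, ℓ}. Then for every α with 1 < α < ∞ and every strictly positive probability distribution μ on the input alphabet with μK strictly positive, η_α(μ, K) = 1. -/
open scoped BigOperators

noncomputable section

section Defs

variable {X Y : Type*} [Fintype X] [Fintype Y]

/-- `μ` is a probability distribution on the finite alphabet `X`. -/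
def IsProbDist (μ : X → ℝ) : Prop := (∀ x, 0 ≤ μ x) ∧ ∑ x, μ x = 1

/-- `K` is a Markov kernel (row-stochastic matrix) from `X` to `Y`. -/
def IsKernel (K : X → Y → ℝ) : Prop := (∀ x y, 0 ≤ K x y) ∧ ∀ x, ∑ y, K x y = 1

/-- Action of the kernel on a distribution: `(μK)(y) = ∑ₓ μ(x) K(y|x)`. -/
def push (μ : X → ℝ) (K : X → Y → ℝ) (y : Y) : ℝ := ∑ x, μ x * K x y

/-- Rényi divergence of order `α`: `D_α(ν‖μ) = (α-1)⁻¹ log ∑ₓ μ(x) (ν(x)/μ(x))^α`. -/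
def renyiD (α : ℝ) (ν μ : X → ℝ) : ℝ :=
  (α - 1)⁻¹ * Real.log (∑ x, μ x * (ν x / μ x) ^ α)

/-- χ²-divergence: `χ²(ν‖μ) = ∑ₓ (ν(x) - μ(x))²/μ(x)`. -/
def chiSq (ν μ : X → ℝ) : ℝ := ∑ x, (ν x - μ x) ^ 2 / μ x

/-- SDPI constant of the Rényi divergence of order `α` for the pair `(μ, K)`. -/
def etaAlpha (α : ℝ) (μ : X → ℝ) (K : X → Y → ℝ) : ℝ :=
  sSup {r : ℝ | ∃ ν : X → ℝ, IsProbDist ν ∧ ν ≠ μ ∧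
    r = renyiD α (push ν K) (push μ K) / renyiD α ν μ}

/-- SDPI constant of the χ²-divergence for the pair `(μ, K)`. -/
def etaChi (μ : X → ℝ) (K : X → Y → ℝ) : ℝ :=
  sSup {r : ℝ | ∃ ν : X → ℝ, IsProbDist ν ∧ ν ≠ μ ∧
    r = chiSq (push ν K) (push μ K) / chiSq ν μ}

end Defs

section Aux

private lemma jensen_pow {Z : Type*} [Fintype Z] {α : ℝ} (hα : 1 < α)
    (w t : Z → ℝ) (hw : ∀ z, 0 ≤ w z) (hws : ∑ z, w z = 1) (ht : ∀ z, 0 ≤ t z) :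
    (∑ z, w z * t z) ^ α ≤ ∑ z, w z * (t z) ^ α := by
  have h := (convexOn_rpow hα.le).map_sum_le (t := Finset.univ) (w := w) (p := t)
    (fun z _ => hw z) hws (fun z _ => Set.mem_Ici.mpr (ht z))
  simpa [smul_eq_mul] using h

private lemma jensen_ge {Z : Type*} [Fintype Z] {α : ℝ} (hα : 1 < α)
    (p q : Z → ℝ) (hp : ∀ z, 0 < p z) (hq : ∀ z, 0 ≤ q z)
    (hps : ∑ z, p z = 1) (hqs : ∑ z, q z = 1) :
    1 ≤ ∑ z, p z * (q z / p z) ^ α := by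
  have h1 : ∑ z, p z * (q z / p z) = 1 := by
    rw [← hqs]
    refine Finset.sum_congr rfl fun z _ => ?_
    rw [mul_comm, div_mul_cancel₀ _ (hp z).ne']
  have h := jensen_pow hα p (fun z => q z / p z) (fun z => (hp z).le) hps
    (fun z => div_nonneg (hq z) (hp z).le)
  rw [h1, Real.one_rpow] at h
  exact h

private lemma sum_split {Z : Type*} [Fintype Z] [DecidableEq Z] (f g : Z → ℝ) (i ℓ : Z)
    (hil : i ≠ ℓ) (h : ∀ z, z ≠ i → z ≠ ℓ → f z = g z) :
    ∑ z, f z = (∑ z, g z) - g i - g ℓ + f i + f ℓ := by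
  have key : ∑ z, (f z - g z) = (f i - g i) + (f ℓ - g ℓ) := by
    have hp2 : ∑ z ∈ ({i, ℓ} : Finset Z), (f z - g z) = (f i - g i) + (f ℓ - g ℓ) :=
      Finset.sum_pair hil
    rw [← hp2]
    refine (Finset.sum_subset (Finset.subset_univ _) fun z _ hz => ?_).symm
    simp only [Finset.mem_insert, Finset.mem_singleton, not_or] at hz
    rw [h z hz.1 hz.2, sub_self]
  have hd := Finset.sum_sub_distrib (f := f) (g := g) (s := Finset.univ)
  rw [hd] at key
  linarith

private lemma push_sum {X Y : Type*} [Fintype X] [Fintype Y] (ρ : X → ℝ) (K : X → Y → ℝ)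
    (hKs : ∀ x, ∑ y, K x y = 1) : ∑ y, push ρ K y = ∑ x, ρ x := by
  simp only [push]
  rw [Finset.sum_comm]
  refine Finset.sum_congr rfl fun x _ => ?_
  rw [← Finset.mul_sum, hKs, mul_one]

private lemma dpi_sum {X Y : Type*} [Fintype X] [Fintype Y] {α : ℝ} (hα : 1 < α)
    (μ ν : X → ℝ) (K : X → Y → ℝ) (hμpos : ∀ x, 0 < μ x) (hν : ∀ x, 0 ≤ ν x)
    (hKnn : ∀ x y, 0 ≤ K x y) (hKs : ∀ x, ∑ y, K x y = 1)
    (hout : ∀ y, 0 < push μ K y) :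
    ∑ y, push μ K y * (push ν K y / push μ K y) ^ α ≤ ∑ x, μ x * (ν x / μ x) ^ α := by
  have key : ∀ y, push μ K y * (push ν K y / push μ K y) ^ α
      ≤ ∑ x, μ x * K x y * (ν x / μ x) ^ α := by
    intro y
    have hPpos := hout y
    have hws : ∑ x, μ x * K x y / push μ K y = 1 := by
      rw [← Finset.sum_div]
      exact div_self hPpos.ne'
    have hmean : ∑ x, (μ x * K x y / push μ K y) * (ν x / μ x) = push ν K y / push μ K y := by
      have : push ν K y / push μ K y = ∑ x, (ν x * K x y) / push μ K y := by
        rw [← Finset.sum_div]; rfl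
      rw [this]
      refine Finset.sum_congr rfl fun x _ => ?_
      rw [div_mul_eq_mul_div]
      congr 1
      rw [mul_comm (μ x) (K x y), mul_assoc, mul_div_assoc',
        mul_div_cancel_left₀ _ (hμpos x).ne', mul_comm]
    have hj := jensen_pow hα (fun x => μ x * K x y / push μ K y) (fun x => ν x / μ x)
      (fun x => div_nonneg (mul_nonneg (hμpos x).le (hKnn x y)) hPpos.le)
      hws (fun x => div_nonneg (hν x) (hμpos x).le)
    rw [hmean] at hj
    calc push μ K y * (push ν K y / push μ K y) ^ α
        ≤ push μ K y * ∑ x, (μ x * K x y / push μ K y) * (ν x / μ x) ^ α :=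
          mul_le_mul_of_nonneg_left hj hPpos.le
      _ = ∑ x, μ x * K x y * (ν x / μ x) ^ α := by
          rw [Finset.mul_sum]
          refine Finset.sum_congr rfl fun x _ => ?_
          field_simp [hPpos.ne']
  calc ∑ y, push μ K y * (push ν K y / push μ K y) ^ α
      ≤ ∑ y, ∑ x, μ x * K x y * (ν x / μ x) ^ α := Finset.sum_le_sum fun y _ => key y
    _ = ∑ x, μ x * (ν x / μ x) ^ α := by
        rw [Finset.sum_comm]
        refine Finset.sum_congr rfl fun x _ => ?_
        calc ∑ y, μ x * K x y * (ν x / μ x) ^ α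
            = (∑ y, K x y) * (μ x * (ν x / μ x) ^ α) := by
              rw [Finset.sum_mul]
              exact Finset.sum_congr rfl fun y _ => by ring
          _ = μ x * (ν x / μ x) ^ α := by rw [hKs, one_mul]

end Aux

/-- Example 2: if there are inputs `i ≠ ℓ` and outputs `a ≠ b` with
`K_{ia} = K_{ℓb} = 1` and `K_{ja} = K_{jb} = 0` for all `j ∉ {i, ℓ}`, then
`η_α(μ, K) = 1` for every admissible strictly positive `μ` and every `1 < α < ∞`. -/
theorem sdpi_renyi_eq_one_of_deterministic_pair
    (n m : ℕ) (hn : 2 ≤ n)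
    (K : Fin n → Fin m → ℝ) (hK : IsKernel K)
    (i ℓ : Fin n) (hil : i ≠ ℓ) (a b : Fin m) (hab : a ≠ b)
    (hia : K i a = 1) (hlb : K ℓ b = 1)
    (hzero : ∀ j : Fin n, j ≠ i → j ≠ ℓ → K j a = 0 ∧ K j b = 0)
    (α : ℝ) (hα : 1 < α)
    (μ : Fin n → ℝ) (hμ : IsProbDist μ) (hμpos : ∀ x, 0 < μ x)
    (hout : ∀ y, 0 < push μ K y) :
    etaAlpha α μ K = 1 := by
  obtain ⟨hKnn, hKs⟩ := hK
  obtain ⟨hμnn, hμs⟩ := hμ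
  -- rows with a unit entry vanish elsewhere
  have hrow : ∀ (x : Fin n) (c : Fin m), K x c = 1 → ∀ y, y ≠ c → K x y = 0 := by
    intro x c hc y hy
    have h0 : ∑ y' ∈ Finset.univ.erase c, K x y' = 0 := by
      have h1 := Finset.add_sum_erase Finset.univ (K x) (Finset.mem_univ c)
      rw [hKs x, hc] at h1
      linarith
    exact (Finset.sum_eq_zero_iff_of_nonneg (fun y' _ => hKnn x y')).mp h0 y
      (Finset.mem_erase.mpr ⟨hy, Finset.mem_univ y⟩)
  have hiy : ∀ y, y ≠ a → K i y = 0 := hrow i a hia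
  have hly : ∀ y, y ≠ b → K ℓ y = 0 := hrow ℓ b hlb
  have hKla : K ℓ a = 0 := hly a hab
  have hKib : K i b = 0 := hiy b hab.symm
  -- witness distribution
  set ε := μ ℓ / 2 with hε
  have hεpos : 0 < ε := half_pos (hμpos ℓ)
  set ν : Fin n → ℝ :=
    fun x => μ x + ε * ((if x = i then 1 else 0) - (if x = ℓ then 1 else 0)) with hνdef
  have hνi : ν i = μ i + ε := by simp [hνdef, hil]
  have hνl : ν ℓ = ε := by
    have : ν ℓ = μ ℓ + ε * ((if ℓ = i then 1 else 0) - (if ℓ = ℓ then 1 else 0)) := rfl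
    rw [this, if_neg (Ne.symm hil), if_pos rfl, hε]
    ring
  have hνoff : ∀ x, x ≠ i → x ≠ ℓ → ν x = μ x := by
    intro x h1 h2; simp [hνdef, h1, h2]
  have hνnn : ∀ x, 0 ≤ ν x := by
    intro x
    by_cases h1 : x = i
    · rw [h1, hνi]; linarith [hμpos i, hεpos]
    by_cases h2 : x = ℓ
    · rw [h2, hνl]; exact hεpos.le
    · rw [hνoff x h1 h2]; exact (hμpos x).le
  have hνsum : ∑ x, ν x = 1 := by
    rw [sum_split ν μ i ℓ hil hνoff, hμs, hνi, hνl, hε]; ring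
  have hνne : ν ≠ μ := by
    intro h
    have := congrFun h i
    rw [hνi] at this
    linarith
  -- push values
  have hpa : ∀ ρ : Fin n → ℝ, push ρ K a = ρ i := by
    intro ρ
    rw [push, Finset.sum_eq_single i]
    · rw [hia, mul_one]
    · intro x _ hx
      by_cases hxl : x = ℓ
      · subst hxl; rw [hKla, mul_zero]
      · rw [(hzero x hx hxl).1, mul_zero]
    · intro h; exact absurd (Finset.mem_univ i) h
  have hpb : ∀ ρ : Fin n → ℝ, push ρ K b = ρ ℓ := by
    intro ρ
    rw [push, Finset.sum_eq_single ℓ]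
    · rw [hlb, mul_one]
    · intro x _ hx
      by_cases hxi : x = i
      · subst hxi; rw [hKib, mul_zero]
      · rw [(hzero x hxi hx).2, mul_zero]
    · intro h; exact absurd (Finset.mem_univ ℓ) h
  have hpoff : ∀ y, y ≠ a → y ≠ b → push ν K y = push μ K y := by
    intro y h1 h2
    rw [push, push]
    refine Finset.sum_congr rfl fun x _ => ?_
    by_cases hxi : x = i
    · subst hxi; rw [hiy y h1, mul_zero, mul_zero]
    by_cases hxl : x = ℓ
    · subst hxl; rw [hly y h2, mul_zero, mul_zero]
    · rw [hνoff x hxi hxl]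
  have hpushμsum : ∑ y, push μ K y = 1 := by rw [push_sum μ K hKs, hμs]
  -- the two sums agree
  have hSin : ∑ x, μ x * (ν x / μ x) ^ α
      = 1 - μ i - μ ℓ + μ i * (ν i / μ i) ^ α + μ ℓ * (ν ℓ / μ ℓ) ^ α := by
    rw [sum_split (fun x => μ x * (ν x / μ x) ^ α) μ i ℓ hil
      (fun z h1 h2 => by
        show μ z * (ν z / μ z) ^ α = μ z
        rw [hνoff z h1 h2, div_self (hμpos z).ne', Real.one_rpow, mul_one]),
      hμs]
  have hSout : ∑ y, push μ K y * (push ν K y / push μ K y) ^ α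
      = 1 - μ i - μ ℓ + μ i * (ν i / μ i) ^ α + μ ℓ * (ν ℓ / μ ℓ) ^ α := by
    rw [sum_split (fun y => push μ K y * (push ν K y / push μ K y) ^ α) (push μ K) a b hab
      (fun y h1 h2 => by
        show push μ K y * (push ν K y / push μ K y) ^ α = push μ K y
        rw [hpoff y h1 h2, div_self (hout y).ne', Real.one_rpow, mul_one]),
      hpushμsum]
    show 1 - push μ K a - push μ K b + push μ K a * (push ν K a / push μ K a) ^ α
        + push μ K b * (push ν K b / push μ K b) ^ α = _
    rw [hpa ν, hpa μ, hpb ν, hpb μ]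
  -- S_in > 1
  have hSgt : 1 < ∑ x, μ x * (ν x / μ x) ^ α := by
    rw [hSin]
    have hs1 : ν i / μ i = 1 + ε / μ i := by
      rw [hνi, add_div, div_self (hμpos i).ne']
    have hs1pos : 0 < ε / μ i := div_pos hεpos (hμpos i)
    have hb1 : 1 + α * (ε / μ i) < (1 + ε / μ i) ^ α :=
      one_add_mul_self_lt_rpow_one_add (by linarith) hs1pos.ne' hα
    have hs2 : ν ℓ / μ ℓ = 1 + (-(1/2) : ℝ) := by
      rw [hνl, hε, div_right_comm, div_self (hμpos ℓ).ne']; norm_num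
    have hb2 : 1 + α * (-(1/2) : ℝ) < (1 + (-(1/2) : ℝ)) ^ α :=
      one_add_mul_self_lt_rpow_one_add (by norm_num) (by norm_num) hα
    rw [hs1, hs2]
    have g1 : μ i + α * ε < μ i * (1 + ε / μ i) ^ α := by
      have h := mul_lt_mul_of_pos_left hb1 (hμpos i)
      have e : μ i * (1 + α * (ε / μ i)) = μ i + α * ε := by
        rw [mul_add, mul_one, mul_comm (μ i), mul_assoc, div_mul_cancel₀ _ (hμpos i).ne']
      linarith
    have g2 : μ ℓ - α * ε < μ ℓ * (1 + (-(1/2) : ℝ)) ^ α := by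
      have h := mul_lt_mul_of_pos_left hb2 (hμpos ℓ)
      have e : μ ℓ * (1 + α * (-(1/2) : ℝ)) = μ ℓ - α * ε := by rw [hε]; ring
      linarith
    linarith
  have hα1 : (0:ℝ) < (α - 1)⁻¹ := inv_pos.mpr (by linarith)
  have hDpos : 0 < renyiD α ν μ := mul_pos hα1 (Real.log_pos hSgt)
  have hDeq : renyiD α (push ν K) (push μ K) = renyiD α ν μ := by
    rw [renyiD, renyiD, hSout, hSin]
  -- the supremum set
  have hmem : (1:ℝ) ∈ {r : ℝ | ∃ ν' : Fin n → ℝ, IsProbDist ν' ∧ ν' ≠ μ ∧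
      r = renyiD α (push ν' K) (push μ K) / renyiD α ν' μ} :=
    ⟨ν, ⟨hνnn, hνsum⟩, hνne, by rw [hDeq, div_self hDpos.ne']⟩
  have hub : ∀ r ∈ {r : ℝ | ∃ ν' : Fin n → ℝ, IsProbDist ν' ∧ ν' ≠ μ ∧
      r = renyiD α (push ν' K) (push μ K) / renyiD α ν' μ}, r ≤ 1 := by
    rintro r ⟨ρ, ⟨hρnn, hρs⟩, hρne, rfl⟩
    have hSin' : 1 ≤ ∑ x, μ x * (ρ x / μ x) ^ α := jensen_ge hα μ ρ hμpos hρnn hμs hρs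
    have hpρnn : ∀ y, 0 ≤ push ρ K y :=
      fun y => Finset.sum_nonneg fun x _ => mul_nonneg (hρnn x) (hKnn x y)
    have hpρs : ∑ y, push ρ K y = 1 := by rw [push_sum ρ K hKs, hρs]
    have hSout1 : 1 ≤ ∑ y, push μ K y * (push ρ K y / push μ K y) ^ α :=
      jensen_ge hα (push μ K) (push ρ K) hout hpρnn hpushμsum hpρs
    have hle := dpi_sum hα μ ρ K hμpos hρnn hKnn hKs hout
    have hDin0 : 0 ≤ renyiD α ρ μ := mul_nonneg hα1.le (Real.log_nonneg hSin')
    have hDout0 : 0 ≤ renyiD α (push ρ K) (push μ K) :=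
      mul_nonneg hα1.le (Real.log_nonneg hSout1)
    have hDD : renyiD α (push ρ K) (push μ K) ≤ renyiD α ρ μ := by
      rw [renyiD, renyiD]
      exact mul_le_mul_of_nonneg_left
        (Real.log_le_log (by linarith) hle) hα1.le
    rcases eq_or_lt_of_le hDin0 with h0 | h0
    · have hz : renyiD α (push ρ K) (push μ K) = 0 :=
        le_antisymm (by rw [← h0] at hDD; exact hDD) hDout0
      rw [hz]
      simp
    · exact (div_le_one h0).mpr hDD
  rw [etaAlpha]
  exact le_antisymm (csSup_le ⟨1, hmem⟩ hub) (le_csSup ⟨1, hub⟩ hmem)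
end
end

section
/- Let μ = (μ_1, …, μ_n) be a strictly positive probability distribution on a finite alphabet of size n ≥ 2 and K an n × m row-stochastic matrix with μK strictly positive. Suppose η_{χ²}(μ, K) < 1. Then the SDPI constant for Rényi divergence of order 2 satisfies η_2(μ, K) = sup { D_2(νK‖μK)/D_2(ν‖μ) : ν a probability distribution with ν ≠ μ and ν_j = 0 for at least one index j }, i.e. the supremum defining η_2(μ, K) is achieved in the limit over distributions ν with at least one zero entry. -/
open scoped BigOperators

noncomputable section

section D2Defs

variable {X Y : Type*} [Fintype X] [Fintype Y]

/-- Rényi divergence of order 2: `D₂(ν‖μ) = log ∑ⱼ νⱼ²/μⱼ`. -/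
def D2 (ν μ : X → ℝ) : ℝ := Real.log (∑ x, ν x ^ 2 / μ x)

/-- SDPI constant of the order-2 Rényi divergence for the pair `(μ, K)`. -/
def eta2 (μ : X → ℝ) (K : X → Y → ℝ) : ℝ :=
  sSup {r : ℝ | ∃ ν : X → ℝ, IsProbDist ν ∧ ν ≠ μ ∧
    r = D2 (push ν K) (push μ K) / D2 ν μ}

end D2Defs

section Calc

lemma log_affine_hasDeriv {c t : ℝ} (h : 0 < 1 + t*c) :
    HasDerivAt (fun s : ℝ => Real.log (1+s*c)) (c/(1+t*c)) t := by
  have h1 : HasDerivAt (fun s : ℝ => 1+s*c) c t := by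
    simpa using ((hasDerivAt_id t).mul_const c).const_add 1
  have h2 := (Real.hasDerivAt_log h.ne').comp t h1
  simpa [Function.comp_def, div_eq_inv_mul] using h2

lemma phi_hasDeriv {t : ℝ} (ht : 0 < t) :
    HasDerivAt (fun s => (1+s)*Real.log (1+s)/s) ((t - Real.log (1+t))/t^2) t := by
  have h1t : (0:ℝ) < 1 + t := by linarith
  have hlog : HasDerivAt (fun s : ℝ => Real.log (1+s)) ((1+t)⁻¹) t := by
    have h1 : HasDerivAt (fun s : ℝ => 1+s) 1 t := by
      simpa using (hasDerivAt_id t).const_add 1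
    simpa [Function.comp_def] using (Real.hasDerivAt_log h1t.ne').comp t h1
  have hnum : HasDerivAt (fun s : ℝ => (1+s)*Real.log (1+s)) (Real.log (1+t) + 1) t := by
    have h1 : HasDerivAt (fun s : ℝ => 1+s) 1 t := by
      simpa using (hasDerivAt_id t).const_add 1
    have h := h1.mul hlog
    refine h.congr_deriv ?_
    field_simp
  have h := hnum.div (hasDerivAt_id t) ht.ne'
  refine h.congr_deriv ?_
  simp only [id]
  field_simp
  ring

lemma phi_mono {x y : ℝ} (hx : 0 < x) (hxy : x ≤ y) :
    (1+x)*Real.log (1+x)/x ≤ (1+y)*Real.log (1+y)/y := by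
  have hmono := monotoneOn_of_deriv_nonneg (convex_Icc x y)
      (f := fun s => (1+s)*Real.log (1+s)/s)
      (fun t ht => (phi_hasDeriv (lt_of_lt_of_le hx ht.1)).continuousAt.continuousWithinAt)
      (fun t ht => by
        rw [interior_Icc] at ht
        exact (phi_hasDeriv (hx.trans ht.1)).differentiableAt.differentiableWithinAt)
      (fun t ht => by
        rw [interior_Icc] at ht
        have htpos : 0 < t := hx.trans ht.1
        rw [(phi_hasDeriv htpos).deriv]
        apply div_nonneg _ (sq_nonneg _)
        have := Real.log_le_sub_one_of_pos (by linarith : (0:ℝ) < 1+t)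
        linarith)
  exact hmono (Set.left_mem_Icc.2 hxy) (Set.right_mem_Icc.2 hxy) hxy

lemma ratio_mono {a b T : ℝ} (ha : 0 ≤ a) (hab : a ≤ b) (hb : 0 < b) (hT : 1 ≤ T) :
    Real.log (1+a)/Real.log (1+b) ≤ Real.log (1+T*a)/Real.log (1+T*b) := by
  rcases ha.eq_or_lt with h | ha
  · simp [← h]
  have hderiv : ∀ t : ℝ, 1 ≤ t → HasDerivAt (fun s => Real.log (1+s*a)/Real.log (1+s*b))
      ((a/(1+t*a) * Real.log (1+t*b) - Real.log (1+t*a) * (b/(1+t*b))) / (Real.log (1+t*b))^2)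
      t := by
    intro t ht
    have hta : 0 < 1 + t*a := by nlinarith
    have htb : 0 < 1 + t*b := by nlinarith
    have hlb : 0 < Real.log (1+t*b) := Real.log_pos (by nlinarith)
    exact (log_affine_hasDeriv hta).div (log_affine_hasDeriv htb) hlb.ne'
  have hmono := monotoneOn_of_deriv_nonneg (convex_Icc (1:ℝ) T)
      (f := fun s => Real.log (1+s*a)/Real.log (1+s*b))
      (fun t ht => (hderiv t ht.1).continuousAt.continuousWithinAt)
      (fun t ht => by
        rw [interior_Icc] at ht
        exact (hderiv t ht.1.le).differentiableAt.differentiableWithinAt)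
      (fun t ht => by
        rw [interior_Icc] at ht
        have ht1 : 1 ≤ t := ht.1.le
        have htpos : 0 < t := by linarith
        rw [(hderiv t ht1).deriv]
        apply div_nonneg _ (sq_nonneg _)
        have hta : 0 < 1 + t*a := by nlinarith
        have htb : 0 < 1 + t*b := by nlinarith
        have hphi := phi_mono (mul_pos htpos ha) (by nlinarith : t*a ≤ t*b)
        rw [div_le_div_iff₀ (mul_pos htpos ha) (mul_pos htpos hb)] at hphi
        rw [sub_nonneg, div_mul_eq_mul_div, ← mul_div_assoc, div_le_div_iff₀ htb hta]
        nlinarith [hphi, htpos])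
  have h1m : (1:ℝ) ∈ Set.Icc 1 T := ⟨le_refl 1, hT⟩
  have hTm : T ∈ Set.Icc (1:ℝ) T := ⟨hT, le_refl T⟩
  simpa using hmono h1m hTm hT
end Calc

section Aux
variable {X Y : Type*} [Fintype X] [Fintype Y]

lemma sum_push (ν : X → ℝ) (K : X → Y → ℝ) (hK : IsKernel K) :
    ∑ y, push ν K y = ∑ x, ν x := by
  simp only [push]
  rw [Finset.sum_comm]
  simp [← Finset.mul_sum, hK.2]

lemma sum_sq_div_eq (ν μ : X → ℝ) (hμ : ∀ x, 0 < μ x)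
    (hν1 : ∑ x, ν x = 1) (hμ1 : ∑ x, μ x = 1) :
    ∑ x, ν x ^ 2 / μ x = 1 + chiSq ν μ := by
  have h : ∀ x, ν x ^ 2 / μ x = (ν x - μ x)^2/μ x + 2 * ν x - μ x := fun x => by
    have h0 := (hμ x).ne'
    field_simp
    ring
  rw [Finset.sum_congr rfl (fun x _ => h x), Finset.sum_sub_distrib, Finset.sum_add_distrib,
    ← Finset.mul_sum, hν1, hμ1]
  simp [chiSq]
  ring

lemma D2_eq (ν μ : X → ℝ) (hμ : ∀ x, 0 < μ x)
    (hν1 : ∑ x, ν x = 1) (hμ1 : ∑ x, μ x = 1) :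
    D2 ν μ = Real.log (1 + chiSq ν μ) := by
  rw [D2, sum_sq_div_eq ν μ hμ hν1 hμ1]

lemma chiSq_nonneg (ν μ : X → ℝ) (hμ : ∀ x, 0 < μ x) : 0 ≤ chiSq ν μ :=
  Finset.sum_nonneg fun x _ => div_nonneg (sq_nonneg _) (hμ x).le

lemma chiSq_pos {ν μ : X → ℝ} (hμ : ∀ x, 0 < μ x) (h : ν ≠ μ) : 0 < chiSq ν μ := by
  obtain ⟨x, hx⟩ := Function.ne_iff.1 h
  refine Finset.sum_pos' (fun i _ => div_nonneg (sq_nonneg _) (hμ i).le)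
    ⟨x, Finset.mem_univ x, div_pos ?_ (hμ x)⟩
  have hne : ν x - μ x ≠ 0 := sub_ne_zero.2 hx
  positivity

lemma engel_zero (f g : X → ℝ) (hg : ∀ x, 0 ≤ g x) (hfg : ∀ x, g x = 0 → f x = 0) :
    (∑ x, f x)^2 / (∑ x, g x) ≤ ∑ x, f x^2 / g x := by
  classical
  have hf' : ∑ x, f x = ∑ x ∈ Finset.univ.filter (fun x => 0 < g x), f x := by
    rw [Finset.sum_filter_of_ne]
    intro x _ hfx
    exact lt_of_le_of_ne (hg x) (fun h => hfx (hfg x h.symm))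
  have hg' : ∑ x, g x = ∑ x ∈ Finset.univ.filter (fun x => 0 < g x), g x := by
    rw [Finset.sum_filter_of_ne]
    intro x _ hgx
    exact lt_of_le_of_ne (hg x) (Ne.symm hgx)
  have hq : ∑ x, f x^2 / g x = ∑ x ∈ Finset.univ.filter (fun x => 0 < g x), f x^2/g x := by
    rw [Finset.sum_filter_of_ne]
    intro x _ hx
    refine lt_of_le_of_ne (hg x) fun h => hx ?_
    rw [← h, div_zero]
  rw [hf', hg', hq]
  exact Finset.sq_sum_div_le_sum_sq_div _ f (fun i hi => (Finset.mem_filter.1 hi).2)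

lemma chiSq_dpi (ν μ : X → ℝ) (K : X → Y → ℝ) (hK : IsKernel K) (hμpos : ∀ x, 0 < μ x) :
    chiSq (push ν K) (push μ K) ≤ chiSq ν μ := by
  have hstep : ∀ y, (push ν K y - push μ K y)^2 / push μ K y
      ≤ ∑ x, (ν x - μ x)^2/μ x * K x y := by
    intro y
    have hdiff : push ν K y - push μ K y = ∑ x, (ν x - μ x) * K x y := by
      simp [push, sub_mul, Finset.sum_sub_distrib]
    rw [hdiff, show push μ K y = ∑ x, μ x * K x y from rfl]
    refine le_trans (engel_zero (fun x => (ν x - μ x) * K x y) (fun x => μ x * K x y)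
      (fun x => mul_nonneg (hμpos x).le (hK.1 x y))
      (fun x h => by
        have : K x y = 0 := by
          rcases mul_eq_zero.1 h with h' | h'
          · exact absurd h' (hμpos x).ne'
          · exact h'
        simp [this])) (le_of_eq (Finset.sum_congr rfl fun x _ => ?_))
    rcases eq_or_lt_of_le (hK.1 x y) with h0 | h0
    · simp [← h0]
    · have hμx := (hμpos x).ne'
      have hKx := h0.ne'
      field_simp
  calc chiSq (push ν K) (push μ K) ≤ ∑ y, ∑ x, (ν x - μ x)^2/μ x * K x y :=
        Finset.sum_le_sum fun y _ => hstep y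
    _ = ∑ x, (ν x - μ x)^2/μ x := by
        rw [Finset.sum_comm]
        simp [← Finset.mul_sum, hK.2]
    _ = chiSq ν μ := rfl

end Aux


/-- Theorem 3: if `η_{χ²}(μ, K) < 1`, then the supremum defining `η_2(μ, K)` is
achieved over distributions `ν ≠ μ` having at least one zero entry. -/
theorem eta2_eq_sup_boundary
    (n m : ℕ) (hn : 2 ≤ n)
    (K : Fin n → Fin m → ℝ) (hK : IsKernel K)
    (μ : Fin n → ℝ) (hμ : IsProbDist μ) (hμpos : ∀ i, 0 < μ i)
    (hout : ∀ j, 0 < push μ K j)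
    (hchi : etaChi μ K < 1) :
    eta2 μ K =
      sSup {r : ℝ | ∃ ν : Fin n → ℝ, IsProbDist ν ∧ ν ≠ μ ∧ (∃ j, ν j = 0) ∧
        r = D2 (push ν K) (push μ K) / D2 ν μ} := by
  classical
  set S : Set ℝ := {r : ℝ | ∃ ν : Fin n → ℝ, IsProbDist ν ∧ ν ≠ μ ∧
    r = D2 (push ν K) (push μ K) / D2 ν μ} with hSdef
  set B : Set ℝ := {r : ℝ | ∃ ν : Fin n → ℝ, IsProbDist ν ∧ ν ≠ μ ∧ (∃ j, ν j = 0) ∧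
    r = D2 (push ν K) (push μ K) / D2 ν μ} with hBdef
  have hBS : B ⊆ S := by
    rintro r ⟨ν, h1, h2, _, h4⟩
    exact ⟨ν, h1, h2, h4⟩
  -- every ratio in S is at most 1
  have hub : ∀ r ∈ S, r ≤ 1 := by
    rintro r ⟨ν, hν, hνμ, rfl⟩
    have hb : 0 < chiSq ν μ := chiSq_pos hμpos hνμ
    have ha : 0 ≤ chiSq (push ν K) (push μ K) := chiSq_nonneg _ _ hout
    have hab : chiSq (push ν K) (push μ K) ≤ chiSq ν μ := chiSq_dpi ν μ K hK hμpos
    rw [D2_eq ν μ hμpos hν.2 hμ.2,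
      D2_eq (push ν K) (push μ K) hout (by rw [sum_push ν K hK, hν.2]) (by rw [sum_push μ K hK, hμ.2])]
    rw [div_le_one (Real.log_pos (by linarith))]
    exact Real.log_le_log (by linarith) (by linarith)
  -- B is nonempty
  have i0 : Fin n := ⟨0, by omega⟩
  have i1 : Fin n := ⟨1, by omega⟩
  have hBne : B.Nonempty := by
    refine ⟨_, (⟨fun i => if i = (⟨0, by omega⟩ : Fin n) then 1 else 0,
      ⟨fun i => by positivity, by simp⟩, ?_, ⟨⟨1, by omega⟩, by simp [Fin.ext_iff]⟩, rfl⟩ :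
      _ ∈ B)⟩
    intro h
    have := congrFun h (⟨1, by omega⟩ : Fin n)
    simp [Fin.ext_iff] at this
    exact (hμpos _).ne this
  have hSbdd : BddAbove S := ⟨1, fun r hr => hub r hr⟩
  have hBbdd : BddAbove B := ⟨1, fun r hr => hub r (hBS hr)⟩
  refine le_antisymm ?_ (csSup_le_csSup hSbdd hBne hBS)
  refine csSup_le (hBne.mono hBS) ?_
  rintro r ⟨ν, hν, hνμ, rfl⟩
  -- construct the boundary distribution
  have hTne : (Finset.univ.filter (fun i => ν i < μ i)).Nonempty := by
    by_contra h
    rw [Finset.not_nonempty_iff_eq_empty, Finset.filter_eq_empty_iff] at h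
    apply hνμ
    funext i
    have hle : ∀ j, μ j ≤ ν j := fun j => not_lt.1 (h (Finset.mem_univ j))
    have hsum : ∑ j, (ν j - μ j) = 0 := by
      rw [Finset.sum_sub_distrib, hν.2, hμ.2, sub_self]
    have := (Finset.sum_eq_zero_iff_of_nonneg (fun j _ => by linarith [hle j])).1 hsum i
      (Finset.mem_univ i)
    linarith
  set t : ℝ := (Finset.univ.filter (fun i => ν i < μ i)).inf' hTne
    (fun i => μ i / (μ i - ν i)) with htdef
  obtain ⟨j0, hj0mem, hj0⟩ := Finset.exists_mem_eq_inf' hTne (fun i => μ i / (μ i - ν i))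
  have hj0lt : ν j0 < μ j0 := (Finset.mem_filter.1 hj0mem).2
  have ht1 : 1 ≤ t := by
    refine Finset.le_inf' hTne _ fun i hi => ?_
    have hi' : ν i < μ i := (Finset.mem_filter.1 hi).2
    rw [le_div_iff₀ (by linarith)]
    have := hν.1 i
    linarith
  have htpos : 0 < t := by linarith
  set ν' : Fin n → ℝ := fun i => μ i + t * (ν i - μ i) with hν'def
  have hν'app : ∀ i, ν' i = μ i + t * (ν i - μ i) := fun i => rfl
  have hν'0 : ν' j0 = 0 := by
    have hd : μ j0 - ν j0 ≠ 0 := by linarith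
    have htj : t = μ j0 / (μ j0 - ν j0) := htdef.trans hj0
    rw [hν'app j0, htj]
    field_simp
    ring
  have hν'nonneg : ∀ i, 0 ≤ ν' i := by
    intro i
    by_cases hi : ν i < μ i
    · have hle : t ≤ μ i / (μ i - ν i) :=
        Finset.inf'_le _ (Finset.mem_filter.2 ⟨Finset.mem_univ i, hi⟩)
      rw [le_div_iff₀ (by linarith)] at hle
      rw [hν'app i]
      nlinarith
    · push_neg at hi
      have : 0 ≤ t * (ν i - μ i) := mul_nonneg htpos.le (by linarith)
      have := hμpos i
      rw [hν'app i]
      linarith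
  have hν'sum : ∑ i, ν' i = 1 := by
    rw [Finset.sum_congr rfl fun i _ => hν'app i, Finset.sum_add_distrib, ← Finset.mul_sum,
      Finset.sum_sub_distrib, hν.2, hμ.2]
    ring
  have hν'ne : ν' ≠ μ := by
    intro h
    have := congrFun h j0
    rw [hν'0] at this
    exact (hμpos j0).ne this
  have hchi' : chiSq ν' μ = t^2 * chiSq ν μ := by
    simp only [chiSq, Finset.mul_sum]
    refine Finset.sum_congr rfl fun i _ => ?_
    rw [show ν' i - μ i = t * (ν i - μ i) by rw [hν'app i]; ring, mul_pow, mul_div_assoc]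
  have hpush' : ∀ y, push ν' K y = push μ K y + t * (push ν K y - push μ K y) := by
    intro y
    have h1 : ∀ x, ν' x * K x y = μ x * K x y + t * (ν x * K x y - μ x * K x y) :=
      fun x => by rw [hν'app x]; ring
    simp only [push]
    rw [Finset.sum_congr rfl fun x _ => h1 x, Finset.sum_add_distrib, ← Finset.mul_sum,
      Finset.sum_sub_distrib]
  have hchipush' : chiSq (push ν' K) (push μ K) = t^2 * chiSq (push ν K) (push μ K) := by
    simp only [chiSq, Finset.mul_sum]
    refine Finset.sum_congr rfl fun y _ => ?_
    rw [show push ν' K y - push μ K y = t * (push ν K y - push μ K y) by rw [hpush' y]; ring,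
      mul_pow, mul_div_assoc]
  -- comparison of ratios
  have hb : 0 < chiSq ν μ := chiSq_pos hμpos hνμ
  have ha : 0 ≤ chiSq (push ν K) (push μ K) := chiSq_nonneg _ _ hout
  have hab : chiSq (push ν K) (push μ K) ≤ chiSq ν μ := chiSq_dpi ν μ K hK hμpos
  have hT2 : 1 ≤ t^2 := by nlinarith
  have hkey := ratio_mono ha hab hb hT2
  have hsν : ∑ y, push ν K y = 1 := by rw [sum_push ν K hK, hν.2]
  have hsν' : ∑ y, push ν' K y = 1 := by rw [sum_push ν' K hK, hν'sum]
  have hsμ : ∑ y, push μ K y = 1 := by rw [sum_push μ K hK, hμ.2]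
  have hmemB : Real.log (1 + t^2 * chiSq (push ν K) (push μ K)) /
      Real.log (1 + t^2 * chiSq ν μ) ∈ B := by
    refine ⟨ν', ⟨hν'nonneg, hν'sum⟩, hν'ne, ⟨j0, hν'0⟩, ?_⟩
    rw [D2_eq ν' μ hμpos hν'sum hμ.2, D2_eq (push ν' K) (push μ K) hout hsν' hsμ,
      hchi', hchipush']
  calc D2 (push ν K) (push μ K) / D2 ν μ
      = Real.log (1 + chiSq (push ν K) (push μ K)) / Real.log (1 + chiSq ν μ) := by
        rw [D2_eq ν μ hμpos hν.2 hμ.2, D2_eq (push ν K) (push μ K) hout hsν hsμ]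
    _ ≤ Real.log (1 + t^2 * chiSq (push ν K) (push μ K)) /
        Real.log (1 + t^2 * chiSq ν μ) := hkey
    _ ≤ sSup B := le_csSup hBbdd hmemB
end
end
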